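/- Let L ∈ ℂ^{N×s}, let C ∈ ℂ^{N×N} be Hermitian positive definite, define P := L^H C^{−1} L, and assume P is invertible (equivalently, L has full column rank). With the MMSE combiner U := (L L^H + C)^{−1} L, the matrix U^H C U is invertible and det(I_s + (U^H C U)^{−1} U^H L L^H U) = det(I_s + L^H C^{−1} L). (MMSE combining is information-lossless: the post-combining achievable rate log det(I + (U^H C U)^{−1} U^H L L^H U) equals log det(I + L^H C^{−1} L).) -/

import Mathlib

open Matrix
open scoped ComplexOrder

/-!
The push-through identity `(L Lᴴ + C) C⁻¹ L = L (1 + P)` shows that the MMSE combiner is the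
whitened matched filter `C⁻¹ L` followed by the invertible matrix `T = (1 + P)⁻¹`. For any
combiner of the form `U = C⁻¹ L T` one has `Uᴴ C U = Tᴴ P T` and `Uᴴ L Lᴴ U = Tᴴ P P T`, so the
argument of the determinant is `1 + T⁻¹ P T`, which is similar to `1 + P`.
-/

namespace Matrix

variable {m n R : Type*} [Fintype m] [DecidableEq m] [Fintype n] [DecidableEq n] [CommRing R]

theorem mul_add_inv_mul_eq {A : Matrix m n R} {B : Matrix n m R} {C : Matrix m m R}
    (hC : IsUnit C) (hABC : IsUnit (A * B + C)) (hBCA : IsUnit (1 + B * C⁻¹ * A)) :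
    (A * B + C)⁻¹ * A = C⁻¹ * A * (1 + B * C⁻¹ * A)⁻¹ := by
  rw [isUnit_iff_isUnit_det] at hC hABC hBCA
  have push_through : (A * B + C) * (C⁻¹ * A) = A * (1 + B * C⁻¹ * A) := by
    rw [Matrix.add_mul, Matrix.mul_add, mul_nonsing_inv_cancel_left _ _ hC]
    simp only [Matrix.mul_one, Matrix.mul_assoc, add_comm]
  rw [← nonsing_inv_mul_cancel_left _ (C⁻¹ * A) hABC, push_through, ← Matrix.mul_assoc,
    mul_nonsing_inv_cancel_right _ _ hBCA]

theorem det_one_add_inv_mul_mul_mul {V P T : Matrix n n R} (hV : IsUnit V) (hP : IsUnit P)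
    (hT : IsUnit T) : det (1 + (V * P * T)⁻¹ * (V * P * P * T)) = det (1 + P) := by
  have cancel : (V * P * T)⁻¹ * (V * P * P * T) = T⁻¹ * P * T := by
    rw [isUnit_iff_isUnit_det] at hV hP
    simp only [mul_inv_rev, mul_assoc, nonsing_inv_mul_cancel_left _ _ hV,
      nonsing_inv_mul_cancel_left _ _ hP]
  rw [cancel, ← det_conj' hT (1 + P), mul_add, add_mul, mul_one,
    nonsing_inv_mul _ ((isUnit_iff_isUnit_det T).mp hT)]

variable [StarRing R]

theorem isUnit_and_det_eq_of_eq_inv_mul_mul {L : Matrix m n R} {C : Matrix m m R}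
    {T : Matrix n n R} {U : Matrix m n R} (hC : C.IsHermitian) (hCu : IsUnit C)
    (hP : IsUnit (Lᴴ * C⁻¹ * L)) (hT : IsUnit T) (hU : U = C⁻¹ * L * T) :
    IsUnit (Uᴴ * C * U) ∧
      det (1 + (Uᴴ * C * U)⁻¹ * Uᴴ * L * Lᴴ * U) = det (1 + Lᴴ * C⁻¹ * L) := by
  have hUH : Uᴴ = Tᴴ * Lᴴ * C⁻¹ := by
    rw [hU, conjTranspose_mul, conjTranspose_mul, hC.inv.eq, Matrix.mul_assoc]
  have gram : Uᴴ * C * U = Tᴴ * (Lᴴ * C⁻¹ * L) * T := by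
    rw [hUH, hU, nonsing_inv_mul_cancel_right _ _ ((isUnit_iff_isUnit_det C).mp hCu)]
    simp only [Matrix.mul_assoc]
  have signal : Uᴴ * L * Lᴴ * U = Tᴴ * (Lᴴ * C⁻¹ * L) * (Lᴴ * C⁻¹ * L) * T := by
    rw [hUH, hU]
    simp only [Matrix.mul_assoc]
  have hTH : IsUnit Tᴴ := (isUnit_conjTranspose T).mpr hT
  refine ⟨gram ▸ (hTH.mul hP).mul hT, ?_⟩
  calc det (1 + (Uᴴ * C * U)⁻¹ * Uᴴ * L * Lᴴ * U)
      = det (1 + (Uᴴ * C * U)⁻¹ * (Uᴴ * L * Lᴴ * U)) := by simp only [Matrix.mul_assoc]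
    _ = det (1 + Lᴴ * C⁻¹ * L) := by
      rw [signal, gram]
      exact det_one_add_inv_mul_mul_mul hTH hP hT

end Matrix

/-- MMSE combining is information-lossless: with `C` Hermitian positive
definite, `P := Lᴴ C⁻¹ L` invertible and `U := (L Lᴴ + C)⁻¹ L`, the matrix
`Uᴴ C U` is invertible and
`det(I + (Uᴴ C U)⁻¹ Uᴴ L Lᴴ U) = det(I + Lᴴ C⁻¹ L)`. -/
theorem stmt16 (N s : ℕ) (L : Matrix (Fin N) (Fin s) ℂ)
    (C : Matrix (Fin N) (Fin N) ℂ) (hC : C.PosDef)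
    (hP : IsUnit (Lᴴ * C⁻¹ * L)) :
    IsUnit (((L * Lᴴ + C)⁻¹ * L)ᴴ * C * ((L * Lᴴ + C)⁻¹ * L)) ∧
    (1 + (((L * Lᴴ + C)⁻¹ * L)ᴴ * C * ((L * Lᴴ + C)⁻¹ * L))⁻¹ *
        ((L * Lᴴ + C)⁻¹ * L)ᴴ * L * Lᴴ * ((L * Lᴴ + C)⁻¹ * L)).det
      = (1 + Lᴴ * C⁻¹ * L).det := by
  have hS : (1 + Lᴴ * C⁻¹ * L).PosDef :=
    PosDef.one.add_posSemidef (hC.inv.posSemidef.conjTranspose_mul_mul_same L)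
  have hM : (L * Lᴴ + C).PosDef := PosDef.posSemidef_add (posSemidef_self_mul_conjTranspose L) hC
  exact isUnit_and_det_eq_of_eq_inv_mul_mul hC.isHermitian hC.isUnit hP
    (isUnit_nonsing_inv_iff.mpr hS.isUnit) (mul_add_inv_mul_eq hC.isUnit hM.isUnit hS.isUnit)
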